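/- arXiv:2308.09187 — 5 statements merged into one kernel-verified Lean document; each statement's English description precedes it below -/
import Mathlib

section
/- (Variance bound.) Let v ∈ ℝ^d with v ≠ 0 and let q ≥ 1 be an integer. Set ℓ̄ = max_{1 ≤ j ≤ s} ℓ_{j+1}/ℓ_j, d_th = (2/ℓ₁)^{min{q,2}}, and ε_Q = (ℓ̄ + ℓ̄^{-1})/4 + (1/4) ℓ₁² d^{2/min{q,2}} · 1{d ≤ d_th} + (ℓ₁ d^{1/min{q,2}} − 1) · 1{d ≥ d_th} − 1/2, where 1{·} is the indicator function. Then E[‖Q_ℓ(v) − v‖₂²] ≤ ε_Q ‖v‖₂². -/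
open MeasureTheory


open MeasureTheory

/-- The index `⌈u⌉` of the quantization level just below `u`:
the largest `k ≤ s` with `ℓ k ≤ u`. -/
noncomputable def lvlIdx (ℓ : ℕ → ℝ) (s : ℕ) (u : ℝ) : ℕ :=
  sSup {k | k ≤ s ∧ ℓ k ≤ u}

/-- The relative distance `ξ(u)` of `u` to the level above it. -/
noncomputable def xiRel (ℓ : ℕ → ℝ) (s : ℕ) (u : ℝ) : ℝ :=
  (u - ℓ (lvlIdx ℓ s u)) / (ℓ (lvlIdx ℓ s u + 1) - ℓ (lvlIdx ℓ s u))

/-- The law of the random quantizer `q_ℓ(u)`: it takes the value `ℓ ⌈u⌉` with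
probability `1 - ξ(u)` and the value `ℓ (⌈u⌉+1)` with probability `ξ(u)`;
for `u = 1` it is deterministically `1`. -/
noncomputable def qMeasure (ℓ : ℕ → ℝ) (s : ℕ) (u : ℝ) : Measure ℝ :=
  if u = 1 then Measure.dirac 1
  else ENNReal.ofReal (1 - xiRel ℓ s u) • Measure.dirac (ℓ (lvlIdx ℓ s u))
      + ENNReal.ofReal (xiRel ℓ s u) • Measure.dirac (ℓ (lvlIdx ℓ s u + 1))


/-- The `L^q` norm of a vector `v ∈ ℝ^d`. -/
noncomputable def lqNorm {d : ℕ} (q : ℕ) (v : Fin d → ℝ) : ℝ :=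
  (∑ i, |v i| ^ (q : ℝ)) ^ ((q : ℝ)⁻¹)

/-- The joint law of the `d` independent coordinate randomizations
`(q_ℓ(u₁), …, q_ℓ(u_d))`, where `u_i = |v_i| / ‖v‖_q`. -/
noncomputable def QVecMeasure {d : ℕ} (ℓ : ℕ → ℝ) (s q : ℕ) (v : Fin d → ℝ) :
    MeasureTheory.Measure (Fin d → ℝ) :=
  MeasureTheory.Measure.pi fun i => qMeasure ℓ s (|v i| / lqNorm q v)

section quant

variable {s : ℕ} {ℓ : ℕ → ℝ}

lemma lvl_bddAbove (s : ℕ) (ℓ : ℕ → ℝ) (u : ℝ) : BddAbove {k | k ≤ s ∧ ℓ k ≤ u} :=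
  ⟨s, fun _ hk => hk.1⟩

lemma lvl_mem (h0 : ℓ 0 = 0) {u : ℝ} (hu : 0 ≤ u) :
    lvlIdx ℓ s u ≤ s ∧ ℓ (lvlIdx ℓ s u) ≤ u := by
  have h : lvlIdx ℓ s u ∈ {k | k ≤ s ∧ ℓ k ≤ u} :=
    Nat.sSup_mem ⟨0, ⟨Nat.zero_le s, by rw [h0]; exact hu⟩⟩ (lvl_bddAbove s ℓ u)
  exact h

lemma lvl_ge {u : ℝ} {k : ℕ} (hk : k ≤ s) (hku : ℓ k ≤ u) : k ≤ lvlIdx ℓ s u :=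
  le_csSup (lvl_bddAbove s ℓ u) ⟨hk, hku⟩

lemma lvl_lt (h0 : ℓ 0 = 0) (hlast : ℓ (s + 1) = 1)
    {u : ℝ} (hu : 0 ≤ u) (hu1 : u < 1) : u < ℓ (lvlIdx ℓ s u + 1) := by
  obtain ⟨hks, hku⟩ := lvl_mem (s := s) h0 hu
  rcases eq_or_lt_of_le hks with heq | hlt
  · rw [heq, hlast]; exact hu1
  · by_contra hcon
    push_neg at hcon
    have := lvl_ge (s := s) (ℓ := ℓ) (k := lvlIdx ℓ s u + 1) hlt hcon
    omega

lemma lvl_one (h0 : ℓ 0 = 0) (hlast : ℓ (s + 1) = 1)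
    (hmono : ∀ j ≤ s, ℓ j < ℓ (j + 1)) : lvlIdx ℓ s 1 = s := by
  have hle : ∀ j k, j ≤ k → k ≤ s + 1 → ℓ j ≤ ℓ k := by
    intro j k hjk
    induction k, hjk using Nat.le_induction with
    | base => intro _; exact le_rfl
    | succ n hn ih => intro h; exact (ih (by omega)).trans (hmono n (by omega)).le
  refine le_antisymm (lvl_mem (s := s) h0 (by norm_num)).1 ?_
  refine lvl_ge le_rfl ?_
  rw [← hlast]
  exact hle s (s + 1) (Nat.le_succ s) le_rfl

end quant



lemma my_integrable_dirac {f : ℝ → ℝ} (hf : StronglyMeasurable f) (x : ℝ) :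
    Integrable f (Measure.dirac x) := by
  refine ⟨hf.aestronglyMeasurable, ?_⟩
  unfold HasFiniteIntegral
  rw [lintegral_dirac]
  exact ENNReal.coe_lt_top

lemma my_integrable_smul_dirac {f : ℝ → ℝ} (hf : StronglyMeasurable f) (a : ℝ) (x : ℝ) :
    Integrable f (ENNReal.ofReal a • Measure.dirac x) :=
  (my_integrable_dirac hf x).smul_measure ENNReal.ofReal_ne_top

lemma my_integrable_two_dirac {f : ℝ → ℝ} (hf : StronglyMeasurable f) (a b : ℝ) (x y : ℝ) :
    Integrable f (ENNReal.ofReal a • Measure.dirac x + ENNReal.ofReal b • Measure.dirac y) :=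
  (my_integrable_smul_dirac hf a x).add_measure (my_integrable_smul_dirac hf b y)

lemma my_integral_two_dirac {f : ℝ → ℝ} (hf : StronglyMeasurable f) (a b : ℝ)
    (ha : 0 ≤ a) (hb : 0 ≤ b) (x y : ℝ) :
    ∫ ω, f ω ∂(ENNReal.ofReal a • Measure.dirac x + ENNReal.ofReal b • Measure.dirac y)
      = a * f x + b * f y := by
  rw [integral_add_measure (my_integrable_smul_dirac hf a x) (my_integrable_smul_dirac hf b y),
    integral_smul_measure, integral_smul_measure, integral_dirac, integral_dirac,
    ENNReal.toReal_ofReal ha, ENNReal.toReal_ofReal hb]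
  simp [smul_eq_mul]

lemma my_pi_map_eval {d : ℕ} (μ : Fin d → Measure ℝ) [∀ i, IsProbabilityMeasure (μ i)]
    (i : Fin d) : (Measure.pi μ).map (Function.eval i) = μ i := by
  ext t ht
  rw [Measure.map_apply (measurable_pi_apply i) ht, Set.eval_preimage, Measure.pi_pi]
  rw [Finset.prod_eq_single i (fun j _ hj => by rw [Function.update_of_ne hj]; exact measure_univ)
    (fun h => absurd (Finset.mem_univ i) h)]
  rw [Function.update_self]


section quant2

variable {s : ℕ} {ℓ : ℕ → ℝ}

lemma xi_bounds (h0 : ℓ 0 = 0) (hlast : ℓ (s + 1) = 1)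
    (hmono : ∀ j ≤ s, ℓ j < ℓ (j + 1)) {u : ℝ} (hu : 0 ≤ u) (hu1 : u < 1) :
    0 ≤ xiRel ℓ s u ∧ xiRel ℓ s u ≤ 1 := by
  obtain ⟨hks, hku⟩ := lvl_mem (s := s) h0 hu
  have hlt := lvl_lt h0 hlast hu hu1
  have hΔ : 0 < ℓ (lvlIdx ℓ s u + 1) - ℓ (lvlIdx ℓ s u) := by
    have := hmono (lvlIdx ℓ s u) hks; linarith
  rw [xiRel]
  constructor
  · exact div_nonneg (by linarith) hΔ.le
  · rw [div_le_one hΔ]; linarith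

lemma qMeasure_prob (h0 : ℓ 0 = 0) (hlast : ℓ (s + 1) = 1)
    (hmono : ∀ j ≤ s, ℓ j < ℓ (j + 1)) {u : ℝ} (hu : 0 ≤ u) (hu1 : u ≤ 1) :
    IsProbabilityMeasure (qMeasure ℓ s u) := by
  rw [qMeasure]
  split_ifs with h
  · infer_instance
  · have hu1' : u < 1 := lt_of_le_of_ne hu1 h
    obtain ⟨hx0, hx1⟩ := xi_bounds h0 hlast hmono hu hu1'
    constructor
    simp only [Measure.add_apply, Measure.smul_apply, Measure.dirac_apply' _ MeasurableSet.univ,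
      Set.indicator_univ, Pi.one_apply, smul_eq_mul, mul_one]
    rw [← ENNReal.ofReal_add (by linarith) hx0, sub_add_cancel, ENNReal.ofReal_one]

lemma coord_integral (h0 : ℓ 0 = 0) (hlast : ℓ (s + 1) = 1)
    (hmono : ∀ j ≤ s, ℓ j < ℓ (j + 1)) {u : ℝ} (a : ℝ) (hu : 0 ≤ u) (hu1 : u ≤ 1) :
    ∫ ω, (a * ω - a * u) ^ 2 ∂(qMeasure ℓ s u)
      = a ^ 2 * ((u - ℓ (lvlIdx ℓ s u)) * (ℓ (lvlIdx ℓ s u + 1) - u)) := by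
  have hsm : StronglyMeasurable (fun ω : ℝ => (a * ω - a * u) ^ 2) :=
    Continuous.stronglyMeasurable (by fun_prop)
  rw [qMeasure]
  split_ifs with h
  · rw [integral_dirac]
    subst h
    have hk := lvl_one h0 hlast hmono
    rw [hk, hlast]
    ring
  · have hu1' : u < 1 := lt_of_le_of_ne hu1 h
    obtain ⟨hx0, hx1⟩ := xi_bounds h0 hlast hmono hu hu1'
    obtain ⟨hks, hku⟩ := lvl_mem (s := s) h0 hu
    have hlt := lvl_lt h0 hlast hu hu1'
    have hΔ : 0 < ℓ (lvlIdx ℓ s u + 1) - ℓ (lvlIdx ℓ s u) := by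
      have := hmono (lvlIdx ℓ s u) hks; linarith
    rw [my_integral_two_dirac hsm _ _ (by linarith) hx0]
    rw [xiRel]
    field_simp
    ring
end quant2


/-- Core inequality for a quantization interval `[a,b]` with ratio bounded by `L`. -/
lemma my_core1 (a b u L : ℝ) (ha : 0 < a) (hau : a ≤ u) (hub : u ≤ b) (hL : b / a ≤ L) :
    (u - a) * (b - u) ≤ ((L + L⁻¹) / 4 - 1 / 2) * u ^ 2 := by
  have hb : 0 < b := lt_of_lt_of_le ha (hau.trans hub)
  have hab : a ≤ b := hau.trans hub
  have hbLa : b ≤ L * a := by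
    have := (div_le_iff₀ ha).mp hL; linarith
  have hL1 : 1 ≤ L := by
    have h1 : 1 ≤ b / a := (one_le_div ha).2 hab
    linarith
  have hL0 : 0 < L := lt_of_lt_of_le one_pos hL1
  have hinv : L * L⁻¹ = 1 := mul_inv_cancel₀ hL0.ne'
  have h1 : 4 * (a * b) * ((u - a) * (b - u)) ≤ (b - a) ^ 2 * u ^ 2 := by
    nlinarith [sq_nonneg ((a + b) * u - 2 * a * b)]
  have h2 : L * (b - a) ^ 2 ≤ (L - 1) ^ 2 * (a * b) := by
    nlinarith [mul_nonneg (sub_nonneg.2 hbLa) (by nlinarith : (0:ℝ) ≤ L * b - a)]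
  have h3 : (0:ℝ) < 4 * (a * b) * L := by positivity
  rw [← mul_le_mul_iff_right₀ h3]
  calc 4 * (a * b) * L * ((u - a) * (b - u))
      ≤ L * ((b - a) ^ 2 * u ^ 2) := by nlinarith [mul_le_mul_of_nonneg_left h1 hL0.le]
    _ ≤ ((L - 1) ^ 2 * (a * b)) * u ^ 2 := by
        have := mul_le_mul_of_nonneg_right h2 (sq_nonneg u); linarith [this]
    _ = 4 * (a * b) * L * (((L + L⁻¹) / 4 - 1 / 2) * u ^ 2) := by
        linear_combination (-(a * b * u ^ 2)) * hinv

lemma my_key2 (s t τ x : ℝ) (hs0 : 0 ≤ s) (hst : s ≤ t) (hτ0 : 0 ≤ τ) (hτt : τ ≤ t)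
    (hx : 2 ≤ x) : x * τ * s - s ^ 2 ≤ (x - 1) * t ^ 2 := by
  rcases le_or_gt τ s with h | h
  · nlinarith [mul_nonneg (mul_nonneg (by linarith : (0:ℝ) ≤ x) hs0) (sub_nonneg.2 h),
      mul_nonneg (by linarith : (0:ℝ) ≤ x - 1)
        (by nlinarith : (0:ℝ) ≤ t ^ 2 - s ^ 2)]
  · have h1 : 0 ≤ (τ - s) * ((x - 1) * τ - s) := by
      refine mul_nonneg (by linarith) ?_
      nlinarith [mul_nonneg (by linarith : (0:ℝ) ≤ x - 2) hτ0]
    have h2 : 0 ≤ (x - 1) * (t ^ 2 - τ ^ 2) := by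
      refine mul_nonneg (by linarith) ?_
      nlinarith
    nlinarith [h1, h2]

/-- Combination of the small/large coordinate bounds into the final inequality. -/
lemma my_main_combine (ℓ1 A' dd T2 S1 S2 D E2 dth epsQ : ℝ)
    (hℓ1 : 0 < ℓ1) (hA' : 0 ≤ A')
    (hT2 : 0 ≤ T2) (hS2 : 0 ≤ S2) (hS1 : 0 ≤ S1) (hS2T : S2 ≤ T2)
    (hCS : S1 ^ 2 ≤ dd * S2)
    (hD : 0 < D) (hdd0 : 0 ≤ dd)
    (hτT : dd / D ^ 2 ≤ T2)
    (hE : dd ≤ E2 * T2)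
    (hx : dth ≤ dd → 2 ≤ ℓ1 * D)
    (hpoint : ℓ1 * S1 - S2 ≤ dd * (ℓ1 ^ 2 / 4))
    (heps : epsQ = A' + (if dd ≤ dth then 1 / 4 * ℓ1 ^ 2 * E2 else 0)
      + (if dth ≤ dd then ℓ1 * D - 1 else 0)) :
    ℓ1 * S1 - S2 + A' * (T2 - S2) ≤ epsQ * T2 := by
  have hI2 : 0 ≤ (if dth ≤ dd then ℓ1 * D - 1 else 0) := by
    split_ifs with h
    · linarith [hx h]
    · exact le_refl 0
  rcases le_or_gt dd dth with hcase | hcase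
  · rw [heps, if_pos hcase]
    set g := (if dth ≤ dd then ℓ1 * D - 1 else 0) with hgdef
    have h1 : ℓ1 * S1 - S2 ≤ 1 / 4 * ℓ1 ^ 2 * E2 * T2 := by nlinarith [hE]
    nlinarith [mul_nonneg hA' hS2, mul_nonneg hI2 hT2]
  · rw [heps, if_neg (not_le.2 hcase), if_pos hcase.le]
    have h2 : 2 ≤ ℓ1 * D := hx hcase.le
    set s2 := Real.sqrt S2 with hs2def
    set t := Real.sqrt T2 with htdef
    set τ := Real.sqrt dd / D with hτdef
    have hs0 : 0 ≤ s2 := Real.sqrt_nonneg _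
    have hst : s2 ≤ t := Real.sqrt_le_sqrt hS2T
    have hτ0 : 0 ≤ τ := div_nonneg (Real.sqrt_nonneg _) hD.le
    have hτsq : τ ^ 2 = dd / D ^ 2 := by
      rw [hτdef, div_pow, Real.sq_sqrt hdd0]
    have hτt : τ ≤ t := by
      have h3 : τ = Real.sqrt (τ ^ 2) := (Real.sqrt_sq hτ0).symm
      rw [h3, hτsq]
      exact Real.sqrt_le_sqrt hτT
    have hkey := my_key2 s2 t τ (ℓ1 * D) hs0 hst hτ0 hτt h2
    have hS1b : S1 ≤ Real.sqrt dd * s2 := by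
      have h3 : S1 ≤ Real.sqrt (dd * S2) := by
        have h4 := Real.sqrt_le_sqrt hCS
        rwa [Real.sqrt_sq hS1] at h4
      rwa [Real.sqrt_mul hdd0] at h3
    have hτs : ℓ1 * D * τ * s2 = ℓ1 * (Real.sqrt dd * s2) := by
      field_simp [hτdef]
      rw [hτdef]; field_simp
    have ht2 : t ^ 2 = T2 := Real.sq_sqrt hT2
    have hs2sq : s2 ^ 2 = S2 := Real.sq_sqrt hS2
    have h4 : ℓ1 * S1 - S2 ≤ (ℓ1 * D - 1) * T2 := by
      have h5 : ℓ1 * S1 ≤ ℓ1 * (Real.sqrt dd * s2) := mul_le_mul_of_nonneg_left hS1b hℓ1.le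
      calc ℓ1 * S1 - S2 ≤ ℓ1 * D * τ * s2 - s2 ^ 2 := by rw [hτs, hs2sq]; linarith
        _ ≤ (ℓ1 * D - 1) * t ^ 2 := hkey
        _ = (ℓ1 * D - 1) * T2 := by rw [ht2]
    nlinarith [h4, mul_nonneg hA' hS2]


noncomputable def sigQ (ℓ : ℕ → ℝ) (s : ℕ) (t : ℝ) : ℝ :=
  (t - ℓ (lvlIdx ℓ s t)) * (ℓ (lvlIdx ℓ s t + 1) - t)

section quant3

variable {s : ℕ} {ℓ : ℕ → ℝ}

lemma ell_le (hmono : ∀ j ≤ s, ℓ j < ℓ (j + 1)) :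
    ∀ j k, j ≤ k → k ≤ s + 1 → ℓ j ≤ ℓ k := by
  intro j k hjk
  induction k, hjk using Nat.le_induction with
  | base => intro _; exact le_rfl
  | succ n hn ih => intro h; exact (ih (by omega)).trans (hmono n (by omega)).le

lemma coord_integral' (h0 : ℓ 0 = 0) (hlast : ℓ (s + 1) = 1)
    (hmono : ∀ j ≤ s, ℓ j < ℓ (j + 1)) {u : ℝ} (a : ℝ) (hu : 0 ≤ u) (hu1 : u ≤ 1) :
    ∫ ω, (a * ω - a * u) ^ 2 ∂(qMeasure ℓ s u) = a ^ 2 * sigQ ℓ s u :=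
  coord_integral h0 hlast hmono a hu hu1

lemma sigQ_nonneg (h0 : ℓ 0 = 0) (hlast : ℓ (s + 1) = 1)
    (hmono : ∀ j ≤ s, ℓ j < ℓ (j + 1)) {u : ℝ} (hu : 0 ≤ u) (hu1 : u ≤ 1) :
    0 ≤ sigQ ℓ s u := by
  rcases eq_or_lt_of_le hu1 with heq | hlt
  · subst heq
    rw [sigQ, lvl_one h0 hlast hmono, hlast]
    norm_num
  · obtain ⟨hks, hku⟩ := lvl_mem (s := s) h0 hu
    have hlt2 := lvl_lt h0 hlast hu hlt
    rw [sigQ]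
    exact mul_nonneg (by linarith) (by linarith)

lemma sigQ_small (h0 : ℓ 0 = 0) (hmono : ∀ j ≤ s, ℓ j < ℓ (j + 1))
    {u : ℝ} (hu : 0 ≤ u) (hlt : u < ℓ 1) : sigQ ℓ s u = u * (ℓ 1 - u) := by
  obtain ⟨hks, hku⟩ := lvl_mem (s := s) h0 hu
  have hk0 : lvlIdx ℓ s u = 0 := by
    by_contra hne
    have h1 : 1 ≤ lvlIdx ℓ s u := Nat.one_le_iff_ne_zero.mpr hne
    have := ell_le hmono 1 (lvlIdx ℓ s u) h1 (by omega)
    linarith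
  rw [sigQ, hk0, h0]
  ring

lemma sigQ_large (h0 : ℓ 0 = 0) (hlast : ℓ (s + 1) = 1)
    (hmono : ∀ j ≤ s, ℓ j < ℓ (j + 1)) (hs : 1 ≤ s) {u lbar : ℝ}
    (hge : ℓ 1 ≤ u) (hu1 : u ≤ 1)
    (hlb : ∀ k, 1 ≤ k → k ≤ s → ℓ (k + 1) / ℓ k ≤ lbar) :
    sigQ ℓ s u ≤ ((lbar + lbar⁻¹) / 4 - 1 / 2) * u ^ 2 := by
  have hℓ1 : 0 < ℓ 1 := by have := hmono 0 (Nat.zero_le s); rwa [h0] at this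
  have hu0 : 0 ≤ u := le_trans hℓ1.le hge
  obtain ⟨hks, hku⟩ := lvl_mem (s := s) h0 hu0
  have hk1 : 1 ≤ lvlIdx ℓ s u := lvl_ge hs hge
  have hub : u ≤ ℓ (lvlIdx ℓ s u + 1) := by
    rcases eq_or_lt_of_le hu1 with heq | hlt
    · subst heq
      rw [lvl_one h0 hlast hmono, hlast]
    · exact (lvl_lt h0 hlast hu0 hlt).le
  have ha : 0 < ℓ (lvlIdx ℓ s u) :=
    lt_of_lt_of_le hℓ1 (ell_le hmono 1 (lvlIdx ℓ s u) hk1 (by omega))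
  exact my_core1 _ _ _ _ ha hku hub (hlb _ hk1 hks)

end quant3


set_option maxHeartbeats 2000000 in
/-- **Variance bound (Theorem 1).** With `ℓ̄ = max_{1≤j≤s} ℓ_{j+1}/ℓ_j`,
`d_th = (2/ℓ₁)^{min{q,2}}` and
`ε_Q = (ℓ̄ + ℓ̄⁻¹)/4 + (1/4)ℓ₁²d^{2/min{q,2}}·1{d ≤ d_th}
      + (ℓ₁ d^{1/min{q,2}} - 1)·1{d ≥ d_th} - 1/2`,
the random quantization of any `v ≠ 0` satisfies `E[‖Q_ℓ(v) - v‖₂²] ≤ ε_Q ‖v‖₂²`. -/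
theorem QVec_variance_bound (s : ℕ) (ℓ : ℕ → ℝ) (hs : 1 ≤ s)
    (h0 : ℓ 0 = 0) (hlast : ℓ (s + 1) = 1)
    (hmono : ∀ j ≤ s, ℓ j < ℓ (j + 1))
    (d : ℕ) (v : Fin d → ℝ) (hv : v ≠ 0) (q : ℕ) (hq : 1 ≤ q)
    (lbar : ℝ)
    (hlbar : lbar = Finset.sup' (Finset.Icc 1 s) (Finset.nonempty_Icc.mpr hs)
      (fun j => ℓ (j + 1) / ℓ j))
    (dth : ℝ) (hdth : dth = (2 / ℓ 1) ^ ((min q 2 : ℕ) : ℝ))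
    (epsQ : ℝ)
    (hepsQ : epsQ = (lbar + lbar⁻¹) / 4
      + (if (d : ℝ) ≤ dth then (1 / 4) * ℓ 1 ^ 2 * (d : ℝ) ^ ((2 : ℝ) / ((min q 2 : ℕ) : ℝ)) else 0)
      + (if dth ≤ (d : ℝ) then ℓ 1 * (d : ℝ) ^ ((1 : ℝ) / ((min q 2 : ℕ) : ℝ)) - 1 else 0)
      - 1 / 2) :
    ∫ ω, (∑ i, (lqNorm q v * Real.sign (v i) * ω i - v i) ^ 2) ∂(QVecMeasure ℓ s q v)
      ≤ epsQ * ∑ i, (v i) ^ 2 := by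
  classical
  -- basic facts about the levels
  have hℓ1 : 0 < ℓ 1 := by have := hmono 0 (Nat.zero_le s); rwa [h0] at this
  have hlb : ∀ k, 1 ≤ k → k ≤ s → ℓ (k + 1) / ℓ k ≤ lbar := by
    intro k h1 h2
    rw [hlbar]
    exact Finset.le_sup' (fun j => ℓ (j + 1) / ℓ j) (Finset.mem_Icc.mpr ⟨h1, h2⟩)
  have hlbar1 : 1 ≤ lbar := by
    have h2 : ℓ 1 < ℓ 2 := hmono 1 hs
    have h3 : (1 : ℝ) < ℓ (1 + 1) / ℓ 1 := (one_lt_div hℓ1).2 h2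
    have := hlb 1 le_rfl hs
    linarith
  have hlbar0 : 0 < lbar := lt_of_lt_of_le one_pos hlbar1
  have hA'0 : 0 ≤ (lbar + lbar⁻¹) / 4 - 1 / 2 := by
    have hinv : lbar * lbar⁻¹ = 1 := mul_inv_cancel₀ hlbar0.ne'
    have hinv1 : lbar⁻¹ ≤ 1 := by
      rw [inv_le_one_iff₀]; right; exact hlbar1
    nlinarith [mul_nonneg (sub_nonneg.2 hlbar1) (sub_nonneg.2 hinv1)]
  -- facts about the norm
  obtain ⟨i0, hi0⟩ : ∃ i, v i ≠ 0 := Function.ne_iff.mp hv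
  have hd0 : 0 < d := i0.pos
  have hd0' : (0:ℝ) < (d:ℝ) := by exact_mod_cast hd0
  have hd1 : (1:ℝ) ≤ (d:ℝ) := by exact_mod_cast hd0
  set c := lqNorm q v with hcdef
  have hSpos : 0 < ∑ i, |v i| ^ q :=
    Finset.sum_pos' (fun i _ => pow_nonneg (abs_nonneg _) q)
      ⟨i0, Finset.mem_univ _, pow_pos (abs_pos.2 hi0) q⟩
  have hS : c = (∑ i, |v i| ^ q) ^ ((q : ℝ)⁻¹) := by
    rw [hcdef]; simp only [lqNorm, Real.rpow_natCast]
  have hc : 0 < c := by rw [hS]; exact Real.rpow_pos_of_pos hSpos _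
  have hcq : c ^ q = ∑ i, |v i| ^ q := by
    rw [hS]; exact Real.rpow_inv_natCast_pow hSpos.le (by omega)
  set u : Fin d → ℝ := fun i => |v i| / c with hudef
  have hu0 : ∀ i, 0 ≤ u i := fun i => div_nonneg (abs_nonneg _) hc.le
  have hcu : ∀ i, c * u i = |v i| := by
    intro i; rw [hudef]; field_simp
  have hu1 : ∀ i, u i ≤ 1 := by
    intro i
    rw [hudef]
    simp only []
    rw [div_le_one hc]
    refine le_of_pow_le_pow_left₀ (n := q) (by omega) hc.le ?_
    rw [hcq]
    exact Finset.single_le_sum (f := fun j => |v j| ^ q) (fun j _ => pow_nonneg (abs_nonneg _) q) (Finset.mem_univ i)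
  have husum : ∑ i, u i ^ q = 1 := by
    rw [hudef]
    simp only [div_pow]
    rw [← Finset.sum_div, ← hcq, div_self (pow_ne_zero q hc.ne')]
  have hvu : ∀ i, v i = c * Real.sign (v i) * u i := by
    intro i
    rcases lt_trichotomy (v i) 0 with h | h | h
    · rw [Real.sign_of_neg h, hudef]
      simp only []
      rw [abs_of_neg h]
      field_simp
    · rw [h, Real.sign_zero]; ring
    · rw [Real.sign_of_pos h, hudef]
      simp only []
      rw [abs_of_pos h]
      field_simp
  have hsign_sq : ∀ i, Real.sign (v i) ^ 2 ≤ 1 := by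
    intro i
    rcases Real.sign_apply_eq (v i) with h | h | h <;> rw [h] <;> norm_num
  -- probability measures
  haveI hprob : ∀ i, IsProbabilityMeasure (qMeasure ℓ s (u i)) := fun i =>
    qMeasure_prob h0 hlast hmono (hu0 i) (hu1 i)
  have hQV : QVecMeasure ℓ s q v = Measure.pi (fun i => qMeasure ℓ s (u i)) := by
    simp only [QVecMeasure, hudef, hcdef]
  have hmap : ∀ i, (QVecMeasure ℓ s q v).map (Function.eval i) = qMeasure ℓ s (u i) := by
    intro i
    rw [hQV]
    exact my_pi_map_eval _ i
  have hcont : ∀ i, Continuous fun t : ℝ => (c * Real.sign (v i) * t - v i) ^ 2 := by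
    intro i; fun_prop
  have hint : ∀ i : Fin d,
      Integrable (fun t : ℝ => (c * Real.sign (v i) * t - v i) ^ 2) (qMeasure ℓ s (u i)) := by
    intro i
    have hsm := (hcont i).stronglyMeasurable
    rw [qMeasure]
    split_ifs
    · exact my_integrable_dirac hsm _
    · exact my_integrable_two_dirac hsm _ _ _ _
  have hint2 : ∀ i : Fin d,
      Integrable (fun ω : Fin d → ℝ => (c * Real.sign (v i) * ω i - v i) ^ 2)
        (QVecMeasure ℓ s q v) := by
    intro i
    have hsm : AEStronglyMeasurable (fun t : ℝ => (c * Real.sign (v i) * t - v i) ^ 2)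
        ((QVecMeasure ℓ s q v).map (Function.eval i)) :=
      (hcont i).stronglyMeasurable.aestronglyMeasurable
    have h1 := (integrable_map_measure hsm (measurable_pi_apply i).aemeasurable).mp
      (by rw [hmap i]; exact hint i)
    exact h1
  have hstep2 : ∀ i, ∫ ω, (c * Real.sign (v i) * ω i - v i) ^ 2 ∂(QVecMeasure ℓ s q v)
      = (c * Real.sign (v i)) ^ 2 * sigQ ℓ s (u i) := by
    intro i
    have hsm : AEStronglyMeasurable (fun t : ℝ => (c * Real.sign (v i) * t - v i) ^ 2)
        ((QVecMeasure ℓ s q v).map (Function.eval i)) :=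
      (hcont i).stronglyMeasurable.aestronglyMeasurable
    have h1 := integral_map (μ := QVecMeasure ℓ s q v) (φ := Function.eval i)
      (measurable_pi_apply i).aemeasurable hsm
    rw [hmap i] at h1
    simp only [Function.eval] at h1
    rw [← h1]
    have h2 := coord_integral' h0 hlast hmono (c * Real.sign (v i)) (hu0 i) (hu1 i)
    rw [← hvu i] at h2
    exact h2
  -- the key combinatorial inequality
  have hmain : ∑ i, sigQ ℓ s (u i) ≤ epsQ * ∑ i, u i ^ 2 := by
    set A' := (lbar + lbar⁻¹) / 4 - 1 / 2 with hA'def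
    set P := Finset.univ.filter (fun i : Fin d => u i < ℓ 1) with hPdef
    set S1 := ∑ i ∈ P, u i with hS1def
    set S2 := ∑ i ∈ P, u i ^ 2 with hS2def
    set T2 := ∑ i, u i ^ 2 with hT2def
    have hT2_0 : 0 ≤ T2 := Finset.sum_nonneg fun i _ => sq_nonneg _
    have hS2_0 : 0 ≤ S2 := Finset.sum_nonneg fun i _ => sq_nonneg _
    have hS1_0 : 0 ≤ S1 := Finset.sum_nonneg fun i _ => hu0 i
    have hS2T : S2 ≤ T2 :=
      Finset.sum_le_sum_of_subset_of_nonneg (Finset.filter_subset _ _)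
        (fun i _ _ => sq_nonneg _)
    have hcard : ((P.card : ℝ)) ≤ (d : ℝ) := by
      have := Finset.card_filter_le (Finset.univ : Finset (Fin d)) (fun i => u i < ℓ 1)
      have h2 : P.card ≤ d := by simpa [hPdef] using this
      exact_mod_cast h2
    have hCS : S1 ^ 2 ≤ (d : ℝ) * S2 := by
      have h1 : S1 ^ 2 ≤ (P.card : ℝ) * S2 := by
        exact_mod_cast sq_sum_le_card_mul_sum_sq (s := P) (f := u)
      nlinarith [hcard, hS2_0]
    have hsplit : ∑ i, sigQ ℓ s (u i)
        = ∑ i ∈ P, sigQ ℓ s (u i)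
          + ∑ i ∈ Finset.univ.filter (fun i : Fin d => ¬ u i < ℓ 1), sigQ ℓ s (u i) :=
      (Finset.sum_filter_add_sum_filter_not _ _ _).symm
    have hT2split : T2 = S2 + ∑ i ∈ Finset.univ.filter (fun i : Fin d => ¬ u i < ℓ 1), u i ^ 2 :=
      (Finset.sum_filter_add_sum_filter_not _ _ _).symm
    have hPsum : ∑ i ∈ P, sigQ ℓ s (u i) = ℓ 1 * S1 - S2 := by
      rw [hS1def, hS2def, Finset.mul_sum, ← Finset.sum_sub_distrib]
      refine Finset.sum_congr rfl fun i hi => ?_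
      have hi' : u i < ℓ 1 := by
        rw [hPdef] at hi
        exact (Finset.mem_filter.mp hi).2
      rw [sigQ_small h0 hmono (hu0 i) hi']
      ring
    have hPc : ∑ i ∈ Finset.univ.filter (fun i : Fin d => ¬ u i < ℓ 1), sigQ ℓ s (u i)
        ≤ A' * (T2 - S2) := by
      have h1 : ∑ i ∈ Finset.univ.filter (fun i : Fin d => ¬ u i < ℓ 1), sigQ ℓ s (u i)
          ≤ ∑ i ∈ Finset.univ.filter (fun i : Fin d => ¬ u i < ℓ 1), A' * u i ^ 2 := by
        refine Finset.sum_le_sum fun i hi => ?_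
        have hi' : ℓ 1 ≤ u i := not_lt.mp (Finset.mem_filter.mp hi).2
        exact sigQ_large h0 hlast hmono hs hi' (hu1 i) hlb
      rw [← Finset.mul_sum] at h1
      have h2 : ∑ i ∈ Finset.univ.filter (fun i : Fin d => ¬ u i < ℓ 1), u i ^ 2 = T2 - S2 := by
        linarith [hT2split]
      rwa [h2] at h1
    have hpoint : ℓ 1 * S1 - S2 ≤ (d : ℝ) * (ℓ 1 ^ 2 / 4) := by
      rw [hS1def, hS2def, Finset.mul_sum, ← Finset.sum_sub_distrib]
      calc ∑ i ∈ P, (ℓ 1 * u i - u i ^ 2) ≤ ∑ _i ∈ P, ℓ 1 ^ 2 / 4 :=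
            Finset.sum_le_sum fun i _ => by nlinarith [sq_nonneg (ℓ 1 - 2 * u i)]
        _ = (P.card : ℝ) * (ℓ 1 ^ 2 / 4) := by rw [Finset.sum_const, nsmul_eq_mul]
        _ ≤ (d : ℝ) * (ℓ 1 ^ 2 / 4) := by nlinarith [sq_nonneg (ℓ 1)]
    -- case split on q to identify the exponents
    obtain ⟨D, E2, hDpos, hτT, hE, hx, heps⟩ :
        ∃ D E2 : ℝ, 0 < D ∧ (d : ℝ) / D ^ 2 ≤ T2 ∧ (d : ℝ) ≤ E2 * T2
          ∧ (dth ≤ (d : ℝ) → 2 ≤ ℓ 1 * D)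
          ∧ epsQ = A' + (if (d : ℝ) ≤ dth then 1 / 4 * ℓ 1 ^ 2 * E2 else 0)
              + (if dth ≤ (d : ℝ) then ℓ 1 * D - 1 else 0) := by
      rcases eq_or_lt_of_le hq with hq1 | hq2
      · -- q = 1
        have hq1' : q = 1 := hq1.symm
        have hpq : min q 2 = 1 := by omega
        have husum1 : ∑ i, u i = 1 := by
          have := husum
          rw [hq1'] at this
          simpa using this
        have hT2d : 1 ≤ (d : ℝ) * T2 := by
          have h1 : (∑ i, u i) ^ 2 ≤ ((Finset.univ : Finset (Fin d)).card : ℝ) * T2 := by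
            exact_mod_cast sq_sum_le_card_mul_sum_sq (s := Finset.univ) (f := u)
          rw [husum1] at h1
          simpa [Finset.card_univ] using h1
        have hE2eq : (d : ℝ) ^ ((2 : ℝ) / ((min q 2 : ℕ) : ℝ)) = (d : ℝ) ^ (2 : ℕ) := by
          rw [hpq]
          push_cast
          rw [div_one, ← Real.rpow_natCast (d : ℝ) 2]
          norm_num
        have hDeq : (d : ℝ) ^ ((1 : ℝ) / ((min q 2 : ℕ) : ℝ)) = (d : ℝ) := by
          rw [hpq]
          push_cast
          rw [div_one, Real.rpow_one]
        have hdtheq : dth = 2 / ℓ 1 := by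
          rw [hdth, hpq]
          push_cast
          rw [Real.rpow_one]
        refine ⟨(d : ℝ), (d : ℝ) ^ (2 : ℕ), hd0', ?_, ?_, ?_, ?_⟩
        · rw [div_le_iff₀ (by positivity)]
          nlinarith
        · nlinarith
        · intro h
          rw [hdtheq] at h
          have := (div_le_iff₀ hℓ1).mp h
          linarith
        · rw [hepsQ, hA'def, hE2eq, hDeq]
          ring
      · -- 2 ≤ q
        have hpq : min q 2 = 2 := min_eq_right hq2
        have hT21 : 1 ≤ T2 := by
          have h1 : ∑ i, u i ^ q ≤ ∑ i, u i ^ 2 :=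
            Finset.sum_le_sum fun i _ => pow_le_pow_of_le_one (hu0 i) (hu1 i) hq2
          rw [husum] at h1
          exact h1
        have hE2eq : (d : ℝ) ^ ((2 : ℝ) / ((min q 2 : ℕ) : ℝ)) = (d : ℝ) := by
          rw [hpq]
          norm_num
        have hDeq : (d : ℝ) ^ ((1 : ℝ) / ((min q 2 : ℕ) : ℝ)) = Real.sqrt (d : ℝ) := by
          rw [hpq, Real.sqrt_eq_rpow]
          norm_num
        have hdtheq : dth = (2 / ℓ 1) ^ (2 : ℕ) := by
          rw [hdth, hpq, ← Real.rpow_natCast (2 / ℓ 1) 2]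
        have hsq : Real.sqrt (d : ℝ) ^ 2 = (d : ℝ) := Real.sq_sqrt hd0'.le
        refine ⟨Real.sqrt (d : ℝ), (d : ℝ), Real.sqrt_pos.2 hd0', ?_, ?_, ?_, ?_⟩
        · rw [hsq, div_self hd0'.ne']
          exact hT21
        · nlinarith
        · intro h
          rw [hdtheq] at h
          have h2 : 2 / ℓ 1 ≤ Real.sqrt (d : ℝ) := by
            have h3 := Real.sqrt_le_sqrt h
            rwa [Real.sqrt_sq (by positivity)] at h3
          have := (div_le_iff₀ hℓ1).mp h2
          linarith
        · rw [hepsQ, hA'def, hE2eq, hDeq]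
          ring
    calc ∑ i, sigQ ℓ s (u i)
        = ∑ i ∈ P, sigQ ℓ s (u i)
          + ∑ i ∈ Finset.univ.filter (fun i : Fin d => ¬ u i < ℓ 1), sigQ ℓ s (u i) := hsplit
      _ ≤ (ℓ 1 * S1 - S2) + A' * (T2 - S2) := by rw [hPsum]; linarith [hPc]
      _ ≤ epsQ * T2 :=
          my_main_combine (ℓ 1) A' (d : ℝ) T2 S1 S2 D E2 dth epsQ hℓ1 hA'0 hT2_0 hS2_0
            hS1_0 hS2T hCS hDpos hd0'.le hτT hE hx hpoint heps
  -- assemble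
  have hQnn : ∀ i, 0 ≤ sigQ ℓ s (u i) := fun i => sigQ_nonneg h0 hlast hmono (hu0 i) (hu1 i)
  calc ∫ ω, (∑ i, (c * Real.sign (v i) * ω i - v i) ^ 2) ∂(QVecMeasure ℓ s q v)
      = ∑ i, ∫ ω, (c * Real.sign (v i) * ω i - v i) ^ 2 ∂(QVecMeasure ℓ s q v) :=
        integral_finset_sum _ fun i _ => hint2 i
    _ = ∑ i, (c * Real.sign (v i)) ^ 2 * sigQ ℓ s (u i) :=
        Finset.sum_congr rfl fun i _ => hstep2 i
    _ ≤ ∑ i, c ^ 2 * sigQ ℓ s (u i) := by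
        refine Finset.sum_le_sum fun i _ => ?_
        have h1 := hQnn i
        have h2 := hsign_sq i
        nlinarith [mul_nonneg (mul_nonneg (sq_nonneg c) (sub_nonneg.2 h2)) h1]
    _ = c ^ 2 * ∑ i, sigQ ℓ s (u i) := (Finset.mul_sum _ _ _).symm
    _ ≤ c ^ 2 * (epsQ * ∑ i, u i ^ 2) := mul_le_mul_of_nonneg_left hmain (sq_nonneg c)
    _ = epsQ * ∑ i, (v i) ^ 2 := by
        have h7 : ∑ i, (v i) ^ 2 = c ^ 2 * ∑ i, u i ^ 2 := by
          rw [Finset.mul_sum]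
          refine Finset.sum_congr rfl fun i _ => ?_
          rw [← mul_pow, hcu i, sq_abs]
        rw [h7]
        ring
end

section
/- Let δ > 2 and define λ : (0,1) → ℝ by λ(p) = ((1/p)/(2/p − 1)) · ((1/p − 1)/(2/p − 1))^{1−p} · δ^{1−p}. Then p* = (δ − 2)/(δ − 1) lies in (0,1) and minimizes λ over (0,1): λ(p*) ≤ λ(p) for all p ∈ (0,1). -/
/-- The objective `λ(p) = K_p δ^{1-p}` with
`K_p = ((1/p)/(2/p - 1)) ((1/p - 1)/(2/p - 1))^{1-p}`. -/
noncomputable def lamObj (δ p : ℝ) : ℝ :=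
  ((1 / p) / (2 / p - 1)) * ((1 / p - 1) / (2 / p - 1)) ^ (1 - p) * δ ^ (1 - p)

noncomputable def gAux (δ q : ℝ) : ℝ :=
  q * (Real.log δ + Real.log q - Real.log (1 + q)) - Real.log (1 + q)

lemma gAux_hasDerivAt (δ x : ℝ) (hx : 0 < x) :
    HasDerivAt (gAux δ) (Real.log δ + Real.log x - Real.log (1 + x)) x := by
  have h1x : (0:ℝ) < 1 + x := by linarith
  have h2 : HasDerivAt (fun q : ℝ => Real.log (1 + q)) (1 / (1 + x)) x := by
    have := ((hasDerivAt_id x).const_add 1).log h1x.ne'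
    simpa using this
  have inner : HasDerivAt (fun q : ℝ => Real.log δ + Real.log q - Real.log (1 + q))
      (x⁻¹ - 1 / (1 + x)) x :=
    ((Real.hasDerivAt_log hx.ne').const_add (Real.log δ)).sub h2
  have prod := ((hasDerivAt_id x).mul inner).sub h2
  have : HasDerivAt (gAux δ)
      (1 * (Real.log δ + Real.log x - Real.log (1 + x)) + x * (x⁻¹ - 1 / (1 + x))
        - 1 / (1 + x)) x := by
    exact prod
  convert this using 1
  field_simp
  ring

lemma lam_eq (δ p : ℝ) (hδ : 2 < δ) (hp : p ∈ Set.Ioo (0:ℝ) 1) :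
    lamObj δ p = Real.exp (gAux δ (1 - p)) := by
  obtain ⟨hp0, hp1⟩ := hp
  have hδ0 : (0:ℝ) < δ := by linarith
  have hq0 : (0:ℝ) < 1 - p := by linarith
  have h2p : (0:ℝ) < 2 - p := by linarith
  have hne : 2 / p - 1 ≠ 0 := by
    have h : 2 / p - 1 = (2 - p) / p := by field_simp
    rw [h]; positivity
  have h1 : (1 / p) / (2 / p - 1) = 1 / (2 - p) := by
    rw [div_eq_div_iff hne h2p.ne']
    field_simp
  have h2 : (1 / p - 1) / (2 / p - 1) = (1 - p) / (2 - p) := by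
    rw [div_eq_div_iff hne h2p.ne']
    field_simp
  rw [lamObj, h1, h2]
  have hb : (0:ℝ) < (1 - p) / (2 - p) := by positivity
  have hmul : ((1 - p) / (2 - p)) ^ (1 - p) * δ ^ (1 - p)
      = (δ * (1 - p) / (2 - p)) ^ (1 - p) := by
    rw [← Real.mul_rpow hb.le hδ0.le]
    ring_nf
  rw [mul_assoc, hmul]
  have hbase : (0:ℝ) < δ * (1 - p) / (2 - p) := by positivity
  rw [Real.rpow_def_of_pos hbase]
  have hlog : Real.log (δ * (1 - p) / (2 - p))
      = Real.log δ + Real.log (1 - p) - Real.log (1 + (1 - p)) := by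
    rw [Real.log_div (by positivity) h2p.ne', Real.log_mul hδ0.ne' hq0.ne']
    have : 1 + (1 - p) = 2 - p := by ring
    rw [this]
  have h1over : (1 : ℝ) / (2 - p) = Real.exp (-(Real.log (1 + (1 - p)))) := by
    rw [Real.exp_neg, Real.exp_log (by linarith : (0:ℝ) < 1 + (1 - p))]
    norm_num; ring_nf
  rw [h1over, hlog, ← Real.exp_add, gAux]
  ring_nf

/-- For `δ > 2`, the point `p* = (δ - 2)/(δ - 1)` lies in `(0,1)` and minimizes
`λ(p) = ((1/p)/(2/p-1))((1/p-1)/(2/p-1))^{1-p} δ^{1-p}` over `(0,1)`. -/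
theorem lamObj_min_at (δ : ℝ) (hδ : 2 < δ) :
    (δ - 2) / (δ - 1) ∈ Set.Ioo (0 : ℝ) 1 ∧
    ∀ p ∈ Set.Ioo (0 : ℝ) 1, lamObj δ ((δ - 2) / (δ - 1)) ≤ lamObj δ p := by
  have hδ1 : (0:ℝ) < δ - 1 := by linarith
  have hδ0 : (0:ℝ) < δ := by linarith
  have hpstar : (δ - 2) / (δ - 1) ∈ Set.Ioo (0 : ℝ) 1 := by
    constructor
    · apply div_pos (by linarith) hδ1
    · rw [div_lt_one hδ1]; linarith
  refine ⟨hpstar, ?_⟩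
  intro p hp
  set qs : ℝ := 1 / (δ - 1) with hqs
  have hqs_eq : 1 - (δ - 2) / (δ - 1) = qs := by
    rw [hqs]; field_simp; norm_num
  have hqs0 : 0 < qs := by positivity
  have hqs1 : qs < 1 := by
    rw [hqs, div_lt_one hδ1]; linarith
  rw [lam_eq δ _ hδ hpstar, lam_eq δ p hδ hp, hqs_eq, Real.exp_le_exp]
  obtain ⟨hp0, hp1⟩ := hp
  set q : ℝ := 1 - p with hq
  have hq0 : 0 < q := by simp [hq]; linarith
  have hq1 : q < 1 := by simp [hq]; linarith
  -- derivative sign helper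
  have deriv_sign : ∀ x : ℝ, 0 < x →
      deriv (gAux δ) x = Real.log δ + Real.log x - Real.log (1 + x) := fun x hx =>
    (gAux_hasDerivAt δ x hx).deriv
  have cont : ∀ a b : ℝ, 0 < a → ContinuousOn (gAux δ) (Set.Icc a b) := by
    intro a b ha x hx
    exact (gAux_hasDerivAt δ x (lt_of_lt_of_le ha hx.1)).continuousAt.continuousWithinAt
  have diff : ∀ a b : ℝ, 0 < a → DifferentiableOn ℝ (gAux δ) (interior (Set.Icc a b)) := by
    intro a b ha x hx
    rw [interior_Icc] at hx
    exact (gAux_hasDerivAt δ x (lt_trans ha hx.1)).differentiableAt.differentiableWithinAt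
  rcases le_total q qs with hle | hle
  · -- g antitone on [q, qs], so g qs ≤ g q
    have anti : AntitoneOn (gAux δ) (Set.Icc q qs) := by
      apply antitoneOn_of_deriv_nonpos (convex_Icc q qs) (cont q qs hq0) (diff q qs hq0)
      intro x hx
      rw [interior_Icc] at hx
      have hx0 : 0 < x := lt_trans hq0 hx.1
      rw [deriv_sign x hx0]
      have hxle : x * (δ - 1) < 1 := by
        have := hx.2
        rw [hqs, lt_div_iff₀ hδ1] at this
        linarith
      have hlog : Real.log (δ * x) ≤ Real.log (1 + x) := by
        apply Real.log_le_log (by positivity)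
        nlinarith
      rw [← Real.log_mul hδ0.ne' hx0.ne'] at *
      linarith
    have := anti ⟨le_refl q, hle⟩ ⟨hle, le_refl qs⟩ hle
    exact this
  · have mono : MonotoneOn (gAux δ) (Set.Icc qs q) := by
      apply monotoneOn_of_deriv_nonneg (convex_Icc qs q) (cont qs q hqs0) (diff qs q hqs0)
      intro x hx
      rw [interior_Icc] at hx
      have hx0 : 0 < x := lt_trans hqs0 hx.1
      rw [deriv_sign x hx0]
      have hxge : 1 < x * (δ - 1) := by
        have := hx.1
        rw [hqs, div_lt_iff₀ hδ1] at this
        linarith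
      have hlog : Real.log (1 + x) ≤ Real.log (δ * x) := by
        apply Real.log_le_log (by linarith)
        nlinarith
      rw [← Real.log_mul hδ0.ne' hx0.ne']
      linarith
    exact mono ⟨le_refl qs, hle⟩ ⟨hle, le_refl q⟩ hle
end

section
/- (Unbiased compression under relative noise.) Let (Ω, F, P) be a probability space, let a ∈ ℝ^d, and let g, Q : Ω → ℝ^d be square-integrable random vectors. Let G ⊆ F be a sub-σ-algebra such that g is G-measurable. Assume: (i) E[g] = a; (ii) E[‖g − a‖²] ≤ c ‖a‖² for some c > 0; (iii) E[Q | G] = g almost surely; (iv) E[‖Q − g‖² | G] ≤ ε_Q ‖g‖² almost surely, for some ε_Q ≥ 0. Then E[‖Q − a‖²] ≤ (ε_Q (c + 1) + c) ‖a‖². -/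
open MeasureTheory

section Aux

variable {Ω : Type*} [MeasurableSpace Ω] {P : Measure Ω}

private lemma integrable_inner_of_memL2 {E : Type*} [NormedAddCommGroup E]
    [InnerProductSpace ℝ E] {f h : Ω → E} (hf : MemLp f 2 P) (hh : MemLp h 2 P) :
    Integrable (fun ω => (inner ℝ (f ω) (h ω) : ℝ)) P := by
  have h2 := L2.integrable_inner (𝕜 := ℝ) (hf.toLp f) (hh.toLp h)
  refine h2.congr ?_
  filter_upwards [hf.coeFn_toLp, hh.coeFn_toLp] with ω h1 h2
  rw [h1, h2]

private lemma integrable_norm_sq_of_memL2 {E : Type*} [NormedAddCommGroup E]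
    [InnerProductSpace ℝ E] {f : Ω → E} (hf : MemLp f 2 P) :
    Integrable (fun ω => ‖f ω‖ ^ 2) P := by
  have := integrable_inner_of_memL2 hf hf
  simpa only [real_inner_self_eq_norm_sq] using this

end Aux

/-- **Unbiased compression under relative noise (Lemma 3).** If `g` is an unbiased
stochastic oracle for `a` with relative variance `E‖g - a‖² ≤ c ‖a‖²`, and `Q` is an
unbiased compression of `g` (`E[Q | G] = g` a.s.) with conditional compression
variance `E[‖Q - g‖² | G] ≤ ε_Q ‖g‖²` a.s., then
`E[‖Q - a‖²] ≤ (ε_Q (c + 1) + c) ‖a‖²`. -/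
theorem compressed_oracle_relative_noise
    (d : ℕ) {Ω : Type*} [m0 : MeasurableSpace Ω] (P : Measure Ω)
    [IsProbabilityMeasure P]
    (a : EuclideanSpace ℝ (Fin d)) (g Q : Ω → EuclideanSpace ℝ (Fin d))
    (G : MeasurableSpace Ω) (hG : G ≤ m0)
    (hgmeas : StronglyMeasurable[G] g)
    (hg2 : MemLp g 2 P) (hQ2 : MemLp Q 2 P)
    (hunbiased : ∫ ω, g ω ∂P = a)
    (c : ℝ) (hc : 0 < c) (hvar : ∫ ω, ‖g ω - a‖ ^ 2 ∂P ≤ c * ‖a‖ ^ 2)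
    (εQ : ℝ) (hεQ : 0 ≤ εQ)
    (hQunbiased : P[Q|G] =ᵐ[P] g)
    (hQvar : ∀ᵐ ω ∂P,
      (P[fun ω' => ‖Q ω' - g ω'‖ ^ 2|G]) ω ≤ εQ * ‖g ω‖ ^ 2) :
    ∫ ω, ‖Q ω - a‖ ^ 2 ∂P ≤ (εQ * (c + 1) + c) * ‖a‖ ^ 2 := by
  letI : MeasurableSpace Ω := m0
  have hgInt : Integrable g P := hg2.integrable one_le_two
  have hQInt : Integrable Q P := hQ2.integrable one_le_two
  have hQg2 : MemLp (fun ω => Q ω - g ω) 2 P := hQ2.sub hg2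
  have hga2 : MemLp (fun ω => g ω - a) 2 P := hg2.sub (memLp_const a)
  have hIQg : Integrable (fun ω => ‖Q ω - g ω‖ ^ 2) P := integrable_norm_sq_of_memL2 hQg2
  have hIga : Integrable (fun ω => ‖g ω - a‖ ^ 2) P := integrable_norm_sq_of_memL2 hga2
  have hIg : Integrable (fun ω => ‖g ω‖ ^ 2) P := integrable_norm_sq_of_memL2 hg2
  -- coordinate facts
  have hQiInt : ∀ i : Fin d, Integrable (fun ω => Q ω i) P := fun i =>
    (EuclideanSpace.proj (𝕜 := ℝ) i).integrable_comp hQInt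
  have hgiInt : ∀ i : Fin d, Integrable (fun ω => g ω i) P := fun i =>
    (EuclideanSpace.proj (𝕜 := ℝ) i).integrable_comp hgInt
  have hgi_meas : ∀ i : Fin d, StronglyMeasurable[G] (fun ω => g ω i) := fun i =>
    (EuclideanSpace.proj (𝕜 := ℝ) i).continuous.comp_stronglyMeasurable hgmeas
  -- coordinate-wise unbiasedness of the compression
  have hcoord : ∀ i : Fin d, P[fun ω => Q ω i|G] =ᵐ[P] fun ω => g ω i := by
    intro i
    refine (ae_eq_condExp_of_forall_setIntegral_eq hG (hQiInt i)
      (fun s _ _ => (hgiInt i).integrableOn) (fun s hs hμs => ?_)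
      (hgi_meas i).aestronglyMeasurable).symm
    have h1 : ∫ x in s, Q x i ∂P = (EuclideanSpace.proj (𝕜 := ℝ) i) (∫ x in s, Q x ∂P) :=
      (EuclideanSpace.proj (𝕜 := ℝ) i).integral_comp_comm hQInt.integrableOn
    have h2 : ∫ x in s, g x i ∂P = (EuclideanSpace.proj (𝕜 := ℝ) i) (∫ x in s, g x ∂P) :=
      (EuclideanSpace.proj (𝕜 := ℝ) i).integral_comp_comm hgInt.integrableOn
    have h3 : ∫ x in s, Q x ∂P = ∫ x in s, g x ∂P := by
      rw [← setIntegral_condExp hG hQInt hs]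
      exact setIntegral_congr_ae (hG s hs) (hQunbiased.mono fun ω hω _ => hω)
    rw [h1, h2, h3]
  -- the cross term vanishes
  have hterm : ∀ i : Fin d, Integrable (fun ω => (Q ω i - g ω i) * (g ω i - a i)) P := by
    intro i
    have h1 : MemLp (fun ω => Q ω i - g ω i) 2 P :=
      (EuclideanSpace.proj (𝕜 := ℝ) i).comp_memLp' hQg2
    have h2 : MemLp (fun ω => g ω i - a i) 2 P :=
      (EuclideanSpace.proj (𝕜 := ℝ) i).comp_memLp' hga2
    have := integrable_inner_of_memL2 h1 h2
    simpa [RCLike.inner_apply, conj_trivial, mul_comm] using this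
  have hcross1 : ∫ ω, (inner ℝ (Q ω - g ω) (g ω - a) : ℝ) ∂P = 0 := by
    have hsum : ∀ ω, (inner ℝ (Q ω - g ω) (g ω - a) : ℝ) =
        ∑ i : Fin d, (Q ω i - g ω i) * (g ω i - a i) := by
      intro ω
      simp [PiLp.inner_apply, RCLike.inner_apply, conj_trivial, mul_comm]
    simp_rw [hsum]
    rw [integral_finset_sum _ (fun i _ => hterm i)]
    refine Finset.sum_eq_zero fun i _ => ?_
    set f : Ω → ℝ := fun ω => g ω i - a i with hf_def
    set h : Ω → ℝ := fun ω => Q ω i - g ω i with hh_def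
    have hf_meas : StronglyMeasurable[G] f := (hgi_meas i).sub stronglyMeasurable_const
    have hint_h : Integrable h P := (hQiInt i).sub (hgiInt i)
    have hint_fh : Integrable (f * h) P := by
      have := hterm i
      refine this.congr (Filter.Eventually.of_forall fun ω => ?_)
      simp [f, h, Pi.mul_apply, mul_comm]
    have hch : P[h|G] =ᵐ[P] 0 := by
      have hheq : h = (fun ω => Q ω i) - fun ω => g ω i := rfl
      rw [hheq]
      have h1 := condExp_sub (μ := P) (m := G) (f := fun ω => Q ω i)
        (g := fun ω => g ω i) (hQiInt i) (hgiInt i)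
      have h3 : P[fun ω => g ω i|G] = fun ω => g ω i :=
        condExp_of_stronglyMeasurable hG (hgi_meas i) (hgiInt i)
      filter_upwards [h1, hcoord i] with ω h1ω h2ω
      rw [h1ω, Pi.sub_apply, h2ω, h3, Pi.zero_apply, sub_self]
    calc ∫ ω, (Q ω i - g ω i) * (g ω i - a i) ∂P
        = ∫ ω, (f * h) ω ∂P := by
          refine integral_congr_ae (Filter.Eventually.of_forall fun ω => ?_)
          simp [f, h, Pi.mul_apply, mul_comm]
      _ = ∫ ω, (P[f * h|G]) ω ∂P := (integral_condExp hG).symm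
      _ = ∫ ω, (f * P[h|G]) ω ∂P :=
          integral_congr_ae (condExp_mul_of_stronglyMeasurable_left hf_meas hint_fh hint_h)
      _ = 0 := by
          rw [integral_eq_zero_of_ae]
          filter_upwards [hch] with ω hω
          simp [Pi.mul_apply, hω]
  -- the second cross term vanishes
  have hga_int : Integrable (fun ω => g ω - a) P := hgInt.sub (integrable_const a)
  have hga_zero : ∫ ω, (g ω - a) ∂P = 0 := by
    rw [integral_sub hgInt (integrable_const a), hunbiased, integral_const]
    simp
  have hcross2 : ∫ ω, (inner ℝ (g ω - a) a : ℝ) ∂P = 0 := by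
    calc ∫ ω, (inner ℝ (g ω - a) a : ℝ) ∂P = ∫ ω, (inner ℝ a (g ω - a) : ℝ) ∂P := by
          simp_rw [real_inner_comm]
      _ = (inner ℝ a (∫ ω, (g ω - a) ∂P) : ℝ) := integral_inner hga_int a
      _ = 0 := by rw [hga_zero, inner_zero_right]
  -- main decomposition
  have hinnerQg_ga : Integrable (fun ω => (inner ℝ (Q ω - g ω) (g ω - a) : ℝ)) P :=
    integrable_inner_of_memL2 hQg2 hga2
  have hmain : ∫ ω, ‖Q ω - a‖ ^ 2 ∂P
      = ∫ ω, ‖Q ω - g ω‖ ^ 2 ∂P + ∫ ω, ‖g ω - a‖ ^ 2 ∂P := by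
    have expand : ∀ ω, ‖Q ω - a‖ ^ 2
        = ‖Q ω - g ω‖ ^ 2 + 2 * (inner ℝ (Q ω - g ω) (g ω - a) : ℝ) + ‖g ω - a‖ ^ 2 := by
      intro ω
      have := norm_add_sq_real (Q ω - g ω) (g ω - a)
      rwa [sub_add_sub_cancel] at this
    calc ∫ ω, ‖Q ω - a‖ ^ 2 ∂P
        = ∫ ω, (‖Q ω - g ω‖ ^ 2 + 2 * (inner ℝ (Q ω - g ω) (g ω - a) : ℝ)
            + ‖g ω - a‖ ^ 2) ∂P := by simp_rw [expand]
      _ = ∫ ω, (‖Q ω - g ω‖ ^ 2 + 2 * (inner ℝ (Q ω - g ω) (g ω - a) : ℝ)) ∂P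
            + ∫ ω, ‖g ω - a‖ ^ 2 ∂P :=
          integral_add (hIQg.add (hinnerQg_ga.const_mul 2)) hIga
      _ = ∫ ω, ‖Q ω - g ω‖ ^ 2 ∂P + 2 * ∫ ω, (inner ℝ (Q ω - g ω) (g ω - a) : ℝ) ∂P
            + ∫ ω, ‖g ω - a‖ ^ 2 ∂P := by
          rw [integral_add hIQg (hinnerQg_ga.const_mul 2), integral_const_mul]
      _ = ∫ ω, ‖Q ω - g ω‖ ^ 2 ∂P + ∫ ω, ‖g ω - a‖ ^ 2 ∂P := by
          rw [hcross1]; ring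
  -- bound on E‖g‖²
  have hg_norm : ∫ ω, ‖g ω‖ ^ 2 ∂P ≤ (c + 1) * ‖a‖ ^ 2 := by
    have hinner_ga_a : Integrable (fun ω => (inner ℝ (g ω - a) a : ℝ)) P :=
      integrable_inner_of_memL2 hga2 (memLp_const a)
    have expand2 : ∀ ω, ‖g ω‖ ^ 2
        = ‖g ω - a‖ ^ 2 + 2 * (inner ℝ (g ω - a) a : ℝ) + ‖a‖ ^ 2 := by
      intro ω
      have := norm_add_sq_real (g ω - a) a
      rwa [sub_add_cancel] at this
    have heq : ∫ ω, ‖g ω‖ ^ 2 ∂P = ∫ ω, ‖g ω - a‖ ^ 2 ∂P + ‖a‖ ^ 2 := by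
      calc ∫ ω, ‖g ω‖ ^ 2 ∂P
          = ∫ ω, (‖g ω - a‖ ^ 2 + 2 * (inner ℝ (g ω - a) a : ℝ) + ‖a‖ ^ 2) ∂P := by
            simp_rw [expand2]
        _ = ∫ ω, (‖g ω - a‖ ^ 2 + 2 * (inner ℝ (g ω - a) a : ℝ)) ∂P
              + ∫ _ω, ‖a‖ ^ 2 ∂P :=
            integral_add (hIga.add (hinner_ga_a.const_mul 2)) (integrable_const _)
        _ = ∫ ω, ‖g ω - a‖ ^ 2 ∂P + 2 * ∫ ω, (inner ℝ (g ω - a) a : ℝ) ∂P + ‖a‖ ^ 2 := by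
            rw [integral_add hIga (hinner_ga_a.const_mul 2), integral_const_mul,
              integral_const]
            simp
        _ = ∫ ω, ‖g ω - a‖ ^ 2 ∂P + ‖a‖ ^ 2 := by rw [hcross2]; ring
    rw [heq]
    nlinarith [hvar]
  -- bound on E‖Q - g‖² via the conditional bound
  have hQg_bound : ∫ ω, ‖Q ω - g ω‖ ^ 2 ∂P ≤ εQ * ((c + 1) * ‖a‖ ^ 2) := by
    have h1 : ∫ ω, ‖Q ω - g ω‖ ^ 2 ∂P
        = ∫ ω, (P[fun ω' => ‖Q ω' - g ω'‖ ^ 2|G]) ω ∂P := (integral_condExp hG).symm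
    have h2 : ∫ ω, (P[fun ω' => ‖Q ω' - g ω'‖ ^ 2|G]) ω ∂P
        ≤ ∫ ω, εQ * ‖g ω‖ ^ 2 ∂P :=
      integral_mono_ae integrable_condExp (hIg.const_mul εQ) hQvar
    have h3 : ∫ ω, εQ * ‖g ω‖ ^ 2 ∂P = εQ * ∫ ω, ‖g ω‖ ^ 2 ∂P := integral_const_mul _ _
    rw [h1]
    refine h2.trans ?_
    rw [h3]
    exact mul_le_mul_of_nonneg_left hg_norm hεQ
  rw [hmain]
  nlinarith [hQg_bound, hvar]
end

section
/- Let a₁, …, a_T be nonnegative real numbers. Then Σ_{t=1}^T a_t / √(1 + Σ_{i=1}^t a_i) ≤ 2 √(1 + Σ_{t=1}^T a_t). -/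
/-- Key step: for `0 ≤ x ≤ y` with `0 < y`, `(y - x)/√y ≤ 2(√y - √x)`. -/
lemma div_sqrt_step {x y : ℝ} (hx : 0 ≤ x) (hxy : x ≤ y) (hy : 0 < y) :
    (y - x) / Real.sqrt y ≤ 2 * (Real.sqrt y - Real.sqrt x) := by
  have hsy : 0 < Real.sqrt y := Real.sqrt_pos.mpr hy
  rw [div_le_iff₀ hsy]
  have h1 : y - x = (Real.sqrt y - Real.sqrt x) * (Real.sqrt y + Real.sqrt x) := by
    have := Real.sq_sqrt hy.le
    have := Real.sq_sqrt hx
    nlinarith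
  have h2 : Real.sqrt x ≤ Real.sqrt y := Real.sqrt_le_sqrt hxy
  have h3 : 0 ≤ Real.sqrt x := Real.sqrt_nonneg x
  nlinarith

/-- **Adaptive step-size summation lemma.** For nonnegative reals `a₁, …, a_T`:
`Σ_{t=1}^T a_t / √(1 + Σ_{i=1}^t a_i) ≤ 2 √(1 + Σ_{t=1}^T a_t)`. -/
theorem sum_div_sqrt_le (T : ℕ) (a : ℕ → ℝ) (ha : ∀ t, 0 ≤ a t) :
    ∑ t ∈ Finset.Icc 1 T, a t / Real.sqrt (1 + ∑ i ∈ Finset.Icc 1 t, a i)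
      ≤ 2 * Real.sqrt (1 + ∑ t ∈ Finset.Icc 1 T, a t) := by
  induction T with
  | zero =>
    simp [Finset.Icc_eq_empty_of_lt]
  | succ T ih =>
    have hSnn : ∀ n, (0:ℝ) ≤ ∑ i ∈ Finset.Icc 1 n, a i :=
      fun n => Finset.sum_nonneg fun i _ => ha i
    have hIcc : Finset.Icc 1 (T + 1) = insert (T+1) (Finset.Icc 1 T) := by
      ext n; simp [Nat.lt_succ_iff]; omega
    have hnotmem : T + 1 ∉ Finset.Icc 1 T := by simp
    rw [hIcc, Finset.sum_insert hnotmem, Finset.sum_insert hnotmem]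
    set x : ℝ := 1 + ∑ i ∈ Finset.Icc 1 T, a i with hx
    set y : ℝ := 1 + (a (T+1) + ∑ i ∈ Finset.Icc 1 T, a i) with hy
    have hx0 : (0:ℝ) ≤ x := by have := hSnn T; simp only [hx]; linarith
    have hy0 : (0:ℝ) < y := by
      have := hSnn T; have := ha (T+1); simp only [hy]; linarith
    have hxy : x ≤ y := by simp only [hx, hy]; linarith [ha (T+1)]
    have key : a (T+1) / Real.sqrt y ≤ 2 * (Real.sqrt y - Real.sqrt x) := by
      have := div_sqrt_step hx0 hxy hy0
      have hyx : y - x = a (T+1) := by simp only [hx, hy]; ring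
      rwa [hyx] at this
    have h1 : a (T+1) / Real.sqrt (1 + ∑ i ∈ Finset.Icc 1 (T+1), a i)
        = a (T+1) / Real.sqrt y := by
      rw [hIcc, Finset.sum_insert hnotmem]
    rw [h1]
    linarith [ih]
end

section
/- (Sparsity of quantized vectors.) Let v ∈ ℝ^d with v ≠ 0, let q ≥ 1 be an integer, and set u_i = |v_i|/‖v‖_q. Then the expected number of nonzero coordinates of the random quantization Q_ℓ(v) satisfies E[‖Q_ℓ(v)‖₀] = d − Σ_{i : u_i < ℓ₁} (ℓ₁ − u_i)/ℓ₁, where ‖w‖₀ denotes the number of nonzero entries of w ∈ ℝ^d. -/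
open MeasureTheory


open MeasureTheory

namespace QSparse

variable {ℓ : ℕ → ℝ} {s : ℕ}

lemma ell_mono (hmono : ∀ j ≤ s, ℓ j < ℓ (j + 1)) :
    ∀ {j k : ℕ}, j ≤ k → k ≤ s + 1 → ℓ j ≤ ℓ k := by
  intro j k hjk hk
  induction k with
  | zero => simp [Nat.le_zero.mp hjk]
  | succ n ih =>
    rcases Nat.eq_or_lt_of_le hjk with h | h
    · simp [h]
    · exact le_trans (ih (Nat.lt_succ_iff.mp h) (by omega))
        (le_of_lt (hmono n (by omega)))

lemma lvlIdx_mem (h0 : ℓ 0 = 0) {u : ℝ} (hu : 0 ≤ u) :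
    lvlIdx ℓ s u ≤ s ∧ ℓ (lvlIdx ℓ s u) ≤ u := by
  have hne : ({k | k ≤ s ∧ ℓ k ≤ u} : Set ℕ).Nonempty :=
    ⟨0, by simp [h0, hu]⟩
  have hbdd : BddAbove {k | k ≤ s ∧ ℓ k ≤ u} := ⟨s, fun k hk => hk.1⟩
  exact Nat.sSup_mem hne hbdd

lemma lt_ell_succ (hlast : ℓ (s + 1) = 1) (h0 : ℓ 0 = 0)
    {u : ℝ} (hu : 0 ≤ u) (hu1 : u < 1) :
    u < ℓ (lvlIdx ℓ s u + 1) := by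
  have hbdd : BddAbove {k | k ≤ s ∧ ℓ k ≤ u} := ⟨s, fun k hk => hk.1⟩
  have hle := (lvlIdx_mem (s := s) h0 hu).1
  rcases Nat.eq_or_lt_of_le hle with h | h
  · rw [h, hlast]; exact hu1
  · by_contra hcon
    push_neg at hcon
    have : lvlIdx ℓ s u + 1 ≤ lvlIdx ℓ s u :=
      le_csSup hbdd ⟨by omega, hcon⟩
    omega

lemma lvlIdx_eq_zero (hmono : ∀ j ≤ s, ℓ j < ℓ (j + 1)) (h0 : ℓ 0 = 0)
    {u : ℝ} (hu : 0 ≤ u) (hlt : u < ℓ 1) : lvlIdx ℓ s u = 0 := by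
  by_contra hne
  have h1 : 1 ≤ lvlIdx ℓ s u := Nat.one_le_iff_ne_zero.mpr hne
  have hle := (lvlIdx_mem (s := s) h0 hu).1
  have := ell_mono hmono h1 (by omega)
  have := (lvlIdx_mem (s := s) h0 hu).2
  linarith

lemma one_le_lvlIdx (hs : 1 ≤ s) {u : ℝ} (h1 : ℓ 1 ≤ u) :
    1 ≤ lvlIdx ℓ s u := by
  have hbdd : BddAbove {k | k ≤ s ∧ ℓ k ≤ u} := ⟨s, fun k hk => hk.1⟩
  exact le_csSup hbdd ⟨hs, h1⟩

lemma xi_nonneg (h0 : ℓ 0 = 0) (hmono : ∀ j ≤ s, ℓ j < ℓ (j + 1))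
    {u : ℝ} (hu : 0 ≤ u) : 0 ≤ xiRel ℓ s u := by
  have hmem := lvlIdx_mem (s := s) h0 hu
  have hden : 0 < ℓ (lvlIdx ℓ s u + 1) - ℓ (lvlIdx ℓ s u) :=
    sub_pos.mpr (hmono _ hmem.1)
  exact div_nonneg (sub_nonneg.mpr hmem.2) hden.le

lemma xi_lt_one (h0 : ℓ 0 = 0) (hlast : ℓ (s + 1) = 1)
    (hmono : ∀ j ≤ s, ℓ j < ℓ (j + 1))
    {u : ℝ} (hu : 0 ≤ u) (hu1 : u < 1) : xiRel ℓ s u < 1 := by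
  have hmem := lvlIdx_mem (s := s) h0 hu
  have hden : 0 < ℓ (lvlIdx ℓ s u + 1) - ℓ (lvlIdx ℓ s u) :=
    sub_pos.mpr (hmono _ hmem.1)
  have := lt_ell_succ (s := s) hlast h0 hu hu1
  rw [xiRel, div_lt_one hden]
  linarith

lemma qMeasure_prob (h0 : ℓ 0 = 0) (hlast : ℓ (s + 1) = 1)
    (hmono : ∀ j ≤ s, ℓ j < ℓ (j + 1))
    {u : ℝ} (hu : 0 ≤ u) (hu1 : u ≤ 1) :
    IsProbabilityMeasure (qMeasure ℓ s u) := by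
  rw [qMeasure]
  by_cases h1 : u = 1
  · rw [if_pos h1]; infer_instance
  · rw [if_neg h1]
    have hu1' : u < 1 := lt_of_le_of_ne hu1 h1
    have hξ0 := xi_nonneg (s := s) h0 hmono hu
    have hξ1 := xi_lt_one (s := s) h0 hlast hmono hu hu1'
    constructor
    simp only [Measure.add_apply, Measure.smul_apply, smul_eq_mul,
      Measure.dirac_apply_of_mem (Set.mem_univ _), mul_one]
    rw [← ENNReal.ofReal_add (by linarith) hξ0]
    norm_num

lemma f_meas : Measurable (fun x : ℝ => if x = 0 then (0:ℝ) else 1) := by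
  have : MeasurableSet {x : ℝ | x = 0} := by
    simpa using measurableSet_singleton (0 : ℝ)
  exact Measurable.ite this measurable_const measurable_const

lemma integrable_f_dirac {g : ℝ → ℝ} (hg : Measurable g) (hbd : ∀ x, |g x| ≤ 1)
    (c : ENNReal) (hc : c ≠ ⊤) (a : ℝ) : Integrable g (c • Measure.dirac a) := by
  have h1 : Integrable g (Measure.dirac a) := by
    refine (integrable_const (1 : ℝ)).mono' hg.aestronglyMeasurable ?_
    filter_upwards with x using by simpa using hbd x
  exact h1.smul_measure hc

lemma integral_f_qMeasure (hs : 1 ≤ s) (h0 : ℓ 0 = 0) (hlast : ℓ (s + 1) = 1)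
    (hmono : ∀ j ≤ s, ℓ j < ℓ (j + 1))
    {u : ℝ} (hu : 0 ≤ u) (hu1 : u ≤ 1) :
    ∫ x, (if x = 0 then (0:ℝ) else 1) ∂(qMeasure ℓ s u)
      = 1 - (if u < ℓ 1 then (ℓ 1 - u) / ℓ 1 else 0) := by
  have hℓ1 : 0 < ℓ 1 := by have := hmono 0 (by omega); rw [h0] at this; exact this
  have hℓ1le : ℓ 1 ≤ 1 := by
    have := ell_mono (s := s) hmono (show 1 ≤ s + 1 by omega) le_rfl
    rwa [hlast] at this
  by_cases h1 : u = 1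
  · rw [h1, qMeasure, if_pos rfl, integral_dirac]
    rw [if_neg one_ne_zero, if_neg (by linarith)]
    norm_num
  · have hu1' : u < 1 := lt_of_le_of_ne hu1 h1
    have hmem := lvlIdx_mem (s := s) h0 hu
    have hltsucc := lt_ell_succ (s := s) hlast h0 hu hu1'
    have hξ0 := xi_nonneg (s := s) h0 hmono hu
    have hξ1 := xi_lt_one (s := s) h0 hlast hmono hu hu1'
    rw [qMeasure, if_neg h1]
    rw [integral_add_measure
        (integrable_f_dirac f_meas (by intro x; split <;> norm_num) _ ENNReal.ofReal_ne_top _)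
        (integrable_f_dirac f_meas (by intro x; split <;> norm_num) _ ENNReal.ofReal_ne_top _),
      integral_smul_measure, integral_smul_measure, integral_dirac, integral_dirac,
      ENNReal.toReal_ofReal (by linarith), ENNReal.toReal_ofReal hξ0]
    by_cases hcase : u < ℓ 1
    · have hk0 : lvlIdx ℓ s u = 0 := lvlIdx_eq_zero hmono h0 hu hcase
      rw [if_pos hcase]
      rw [xiRel, hk0, h0]
      rw [if_pos rfl, if_neg (by positivity)]
      field_simp
      simp only [zero_add, sub_zero, smul_eq_mul, mul_zero, mul_one]; rw [mul_div_assoc', mul_div_cancel_left₀ _ hℓ1.ne']; ring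
    · push_neg at hcase
      have hk1 : 1 ≤ lvlIdx ℓ s u := one_le_lvlIdx hs hcase
      have hpos : 0 < ℓ (lvlIdx ℓ s u) := by
        have := ell_mono (s := s) hmono hk1 (by omega)
        linarith
      have hpos' : 0 < ℓ (lvlIdx ℓ s u + 1) := lt_trans hpos (hmono _ hmem.1)
      rw [if_neg hpos.ne', if_neg hpos'.ne', if_neg (not_lt.mpr hcase)]
      simp [smul_eq_mul]


lemma pi_map_eval {d : ℕ} (μ : Fin d → Measure ℝ)
    (hP : ∀ i, IsProbabilityMeasure (μ i)) (i : Fin d) :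
    (Measure.pi μ).map (Function.eval i) = μ i := by
  haveI := hP
  ext A hA
  rw [Measure.map_apply (measurable_pi_apply i) hA, Set.eval_preimage,
    Measure.pi_pi]
  rw [Fintype.prod_eq_single i (fun j hj => by
    rw [Function.update_of_ne hj]; simp)]
  simp

lemma integral_eval_pi {d : ℕ} (μ : Fin d → Measure ℝ)
    (hP : ∀ i, IsProbabilityMeasure (μ i)) (i : Fin d)
    {g : ℝ → ℝ} (hg : Measurable g) :
    ∫ ω, g (ω i) ∂(Measure.pi μ) = ∫ x, g x ∂(μ i) := by
  rw [← pi_map_eval μ hP i,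
    integral_map (measurable_pi_apply i).aemeasurable hg.aestronglyMeasurable]

end QSparse

/-- **Sparsity of quantized vectors (Lemma 4).** For `v ≠ 0` and integer `q ≥ 1`,
with `u_i = |v_i|/‖v‖_q`, the expected number of nonzero coordinates of `Q_ℓ(v)`
equals `d - Σ_{i : u_i < ℓ₁} (ℓ₁ - u_i)/ℓ₁`. -/
theorem QVec_expected_sparsity (s : ℕ) (ℓ : ℕ → ℝ) (hs : 1 ≤ s)
    (h0 : ℓ 0 = 0) (hlast : ℓ (s + 1) = 1)
    (hmono : ∀ j ≤ s, ℓ j < ℓ (j + 1))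
    (d : ℕ) (v : Fin d → ℝ) (hv : v ≠ 0) (q : ℕ) (hq : 1 ≤ q) :
    ∫ ω, (∑ i, if lqNorm q v * Real.sign (v i) * ω i = 0 then (0 : ℝ) else 1)
        ∂(QVecMeasure ℓ s q v)
      = (d : ℝ) - ∑ i, (if |v i| / lqNorm q v < ℓ 1
          then (ℓ 1 - |v i| / lqNorm q v) / ℓ 1 else 0) := by
  classical
  have hq0 : (q : ℝ) ≠ 0 := by
    have : 0 < (q : ℝ) := by exact_mod_cast Nat.pos_of_ne_zero (by omega)
    exact this.ne'
  obtain ⟨i₀, hi₀⟩ : ∃ i, v i ≠ 0 := by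
    by_contra h; push_neg at h; exact hv (funext h)
  have hsum : 0 < ∑ i, |v i| ^ (q : ℝ) := by
    apply Finset.sum_pos' (fun i _ => by positivity)
    exact ⟨i₀, Finset.mem_univ _, by positivity⟩
  have hN : 0 < lqNorm q v := Real.rpow_pos_of_pos hsum _
  have hℓ1 : 0 < ℓ 1 := by
    have := hmono 0 (by omega); rw [h0] at this; exact this
  have hu0 : ∀ i, 0 ≤ |v i| / lqNorm q v :=
    fun i => div_nonneg (abs_nonneg _) hN.le
  have hu1 : ∀ i, |v i| / lqNorm q v ≤ 1 := by
    intro i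
    rw [div_le_one hN]
    have h1 : |v i| = (|v i| ^ (q : ℝ)) ^ ((q : ℝ)⁻¹) := by
      rw [← Real.rpow_mul (abs_nonneg _), mul_inv_cancel₀ hq0, Real.rpow_one]
    rw [h1]
    exact Real.rpow_le_rpow (by positivity)
      (Finset.single_le_sum (f := fun j => |v j| ^ (q : ℝ)) (fun j _ => by positivity) (Finset.mem_univ i))
      (by positivity)
  have hP : ∀ i, IsProbabilityMeasure (qMeasure ℓ s (|v i| / lqNorm q v)) :=
    fun i => QSparse.qMeasure_prob h0 hlast hmono (hu0 i) (hu1 i)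
  haveI : IsProbabilityMeasure (QVecMeasure ℓ s q v) := by
    haveI := hP
    rw [QVecMeasure]; infer_instance
  have hmeas : ∀ i : Fin d, Measurable fun x : ℝ =>
      (if lqNorm q v * Real.sign (v i) * x = 0 then (0:ℝ) else 1) := by
    intro i
    have : MeasurableSet {x : ℝ | lqNorm q v * Real.sign (v i) * x = 0} := by
      exact measurableSet_eq_fun (by fun_prop) measurable_const
    exact Measurable.ite this measurable_const measurable_const
  have hint : ∀ i : Fin d, Integrable (fun ω : Fin d → ℝ =>
      (if lqNorm q v * Real.sign (v i) * ω i = 0 then (0:ℝ) else 1))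
      (QVecMeasure ℓ s q v) := by
    intro i
    refine (integrable_const (1 : ℝ)).mono'
      (((hmeas i).comp (measurable_pi_apply i)).aestronglyMeasurable) ?_
    filter_upwards with ω using by split <;> norm_num
  rw [integral_finset_sum _ (fun i _ => hint i)]
  have key : ∀ i : Fin d, ∫ ω, (if lqNorm q v * Real.sign (v i) * ω i = 0
        then (0:ℝ) else 1) ∂(QVecMeasure ℓ s q v)
      = 1 - (if |v i| / lqNorm q v < ℓ 1
          then (ℓ 1 - |v i| / lqNorm q v) / ℓ 1 else 0) := by
    intro i
    by_cases hvi : v i = 0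
    · have hz : (fun ω : Fin d → ℝ =>
          (if lqNorm q v * Real.sign (v i) * ω i = 0 then (0:ℝ) else 1))
          = fun _ => 0 := by
        funext ω; rw [hvi, Real.sign_zero]; simp
      rw [hz, integral_zero, hvi]
      rw [abs_zero, zero_div, if_pos hℓ1, sub_zero, div_self hℓ1.ne']
      norm_num
    · have hc : lqNorm q v * Real.sign (v i) ≠ 0 :=
        mul_ne_zero hN.ne' (fun h => hvi (Real.sign_eq_zero_iff.mp h))
      have heq : (fun ω : Fin d → ℝ =>
          (if lqNorm q v * Real.sign (v i) * ω i = 0 then (0:ℝ) else 1))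
          = fun ω => (if ω i = 0 then (0:ℝ) else 1) := by
        funext ω
        by_cases h : ω i = 0
        · simp [h]
        · rw [if_neg (mul_ne_zero hc h), if_neg h]
      rw [heq, QVecMeasure, QSparse.integral_eval_pi _ hP i QSparse.f_meas]
      exact QSparse.integral_f_qMeasure hs h0 hlast hmono (hu0 i) (hu1 i)
  rw [Finset.sum_congr rfl (fun i _ => key i), Finset.sum_sub_distrib]
  simp
end
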